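/- arXiv:2504.16367 — 4 statements merged into one kernel-verified Lean document; each statement's English description precedes it below -/
import Mathlib

section
/- Let A be an associative unital ℂ-algebra, Q ∈ ℂ with Q ≠ 0 and Q² ≠ 1, and let u, y ∈ A be invertible with u·y = Q²·y·u. Fix λ ∈ ℂ, λ ≠ 0, and nonzero constants c_E, c_F ∈ ℂ with c_E·c_F = -(Q - Q^{-1})^{-2}. Define K := u^{-1}, F := c_F·y, and E := c_E·((λ + λ^{-1})·y^{-1} + Q·u·y^{-1} + Q^{-1}·u^{-1}·y^{-1}). Then K·E = Q²·E·K, K·F = Q^{-2}·F·K, and E·F - F·E = (K - K^{-1})/(Q - Q^{-1}). -/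
/-!
Write `E = P y⁻¹` with `P` a Laurent polynomial in `u`. Since `u⁻¹` commutes with `P` and
`Q²`-commutes with `y⁻¹`, the two `K`-relations are immediate. For the commutator, `E F = c_F P`
while `F E = c_F (y P y⁻¹)`, and conjugation by `y` rescales `u^{±1}` by `Q^{∓2}`, i.e. swaps the
coefficients `Q` and `Q⁻¹` of `u` and `u⁻¹` in `P`. Hence `E F - F E = c_E c_F (Q - Q⁻¹)(u - u⁻¹)`,
which `c_E c_F = -(Q - Q⁻¹)⁻²` normalises.
-/

section

variable {k A : Type*} [Field k] [Ring A] [Algebra k A]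

def IsWeylPair (q : k) (u y : Aˣ) : Prop :=
  (u : A) * y = q • ((y : A) * u)

namespace IsWeylPair

variable {q : k} {u y : Aˣ}

theorem symm (hq : q ≠ 0) (h : IsWeylPair q u y) : IsWeylPair q⁻¹ y u := by
  rw [IsWeylPair, h, smul_smul, inv_mul_cancel₀ hq, one_smul]

theorem inv_left (hq : q ≠ 0) (h : IsWeylPair q u y) : IsWeylPair q⁻¹ u⁻¹ y :=
  calc ((u⁻¹ : Aˣ) : A) * y = ↑u⁻¹ * ((y : A) * u) * ↑u⁻¹ := by
        rw [mul_assoc, mul_assoc, Units.mul_inv, mul_one]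
    _ = q⁻¹ • ((y : A) * ↑u⁻¹) := by
        rw [h.symm hq, mul_smul_comm, smul_mul_assoc, ← mul_assoc, Units.inv_mul, one_mul]

theorem inv_right (hq : q ≠ 0) (h : IsWeylPair q u y) : IsWeylPair q⁻¹ u y⁻¹ := by
  have h' := (h.symm hq).inv_left (inv_ne_zero hq)
  rw [inv_inv] at h'
  exact h'.symm hq

theorem inv (hq : q ≠ 0) (h : IsWeylPair q u y) : IsWeylPair q u⁻¹ y⁻¹ := by
  have h' := (h.inv_right hq).inv_left (inv_ne_zero hq)
  rwa [inv_inv] at h'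

theorem mul_laurent (hq : q ≠ 0) (h : IsWeylPair q u y) (a b c : k) :
    (y : A) * (a • 1 + b • (u : A) + c • ↑u⁻¹)
      = (a • 1 + (b * q⁻¹) • (u : A) + (c * q) • ↑u⁻¹) * y := by
  have hyu : (y : A) * u = q⁻¹ • ((u : A) * y) := h.symm hq
  have hyu' : (y : A) * ↑u⁻¹ = q • (↑u⁻¹ * (y : A)) := by
    have h' := (h.inv_left hq).symm (inv_ne_zero hq)
    rwa [inv_inv] at h'
  simp only [mul_add, add_mul, mul_smul_comm, smul_mul_assoc, mul_one, one_mul, hyu, hyu',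
    smul_smul]

end IsWeylPair

end

theorem weyl_pair_rep_general {A : Type*} [Ring A] [Algebra ℂ A]
    (Q : ℂ) (hQ0 : Q ≠ 0)
    (u y : Aˣ) (huy : (u : A) * (y : A) = Q ^ 2 • ((y : A) * (u : A)))
    (l : ℂ)
    (cE cF : ℂ)
    (hc : cE * cF = -((Q - Q⁻¹) ^ 2)⁻¹)
    (K E F : A)
    (hK : K = ((u⁻¹ : Aˣ) : A))
    (hF : F = cF • ((y : A)))
    (hE : E = cE • ((l + l⁻¹) • ((y⁻¹ : Aˣ) : A)
        + Q • ((u : A) * ((y⁻¹ : Aˣ) : A))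
        + Q⁻¹ • (((u⁻¹ : Aˣ) : A) * ((y⁻¹ : Aˣ) : A)))) :
    K * E = Q ^ 2 • (E * K) ∧
    K * F = (Q ^ 2)⁻¹ • (F * K) ∧
    E * F - F * E = (Q - Q⁻¹)⁻¹ • (K - ((u : A))) := by
  have hW : IsWeylPair (Q ^ 2) u y := huy
  have hq : Q ^ 2 ≠ 0 := pow_ne_zero 2 hQ0
  set P : A := (cE * (l + l⁻¹)) • 1 + (cE * Q) • (u : A) + (cE * Q⁻¹) • ↑u⁻¹ with hP
  have hEP : E = P * ↑y⁻¹ := by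
    simp only [hE, hP, add_mul, smul_mul_assoc, one_mul, smul_add, smul_smul]
  have hPu : Commute P ↑u⁻¹ :=
    (((Commute.one_left _).smul_left _).add_left
      ((Commute.refl (u : A)).units_inv_right.smul_left _)).add_left
      ((Commute.refl _).smul_left _)
  subst hK hF
  refine ⟨?_, ?_, ?_⟩
  · rw [hEP, ← mul_assoc, ← hPu.eq, mul_assoc, hW.inv hq, mul_smul_comm, ← mul_assoc]
  · rw [mul_smul_comm, smul_mul_assoc, hW.inv_left hq, smul_smul, smul_smul, mul_comm]
  · have hEF : E * cF • (y : A) = cF • P := by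
      rw [hEP, mul_smul_comm, mul_assoc, Units.inv_mul, mul_one]
    have hFE : cF • (y : A) * E
        = cF • ((cE * (l + l⁻¹)) • 1 + (cE * Q⁻¹) • (u : A) + (cE * Q) • ↑u⁻¹) := by
      rw [hEP, smul_mul_assoc, ← mul_assoc, hW.mul_laurent hq, mul_assoc, Units.mul_inv, mul_one]
      match_scalars <;> field_simp
    have hx : cE * cF * (Q - Q⁻¹) = -(Q - Q⁻¹)⁻¹ := by
      rw [hc, neg_mul, neg_inj]
      grind
    rw [hEF, hFE, ← smul_sub]
    match_scalars
    · ring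
    · linear_combination hx
    · linear_combination -hx

/-- The infinite-dimensional representation `π^λ` of `𝒰_Q(sl₂)` inside the quantum torus:
with `uy = Q²yu`, setting `K = u⁻¹`, `F = c_F y`,
`E = c_E((λ+λ⁻¹)y⁻¹ + Q·u·y⁻¹ + Q⁻¹·u⁻¹·y⁻¹)` where `c_E c_F = -(Q-Q⁻¹)⁻²`, the
`𝒰_Q(sl₂)` relations `KE = Q²EK`, `KF = Q⁻²FK`, `[E,F] = (K-K⁻¹)/(Q-Q⁻¹)` hold. -/
theorem weyl_pair_rep {A : Type*} [Ring A] [Algebra ℂ A]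
    (Q : ℂ) (hQ0 : Q ≠ 0) (hQ1 : Q ^ 2 ≠ 1)
    (u y : Aˣ) (huy : (u : A) * (y : A) = Q ^ 2 • ((y : A) * (u : A)))
    (l : ℂ) (hl : l ≠ 0)
    (cE cF : ℂ) (hcE : cE ≠ 0) (hcF : cF ≠ 0)
    (hc : cE * cF = -((Q - Q⁻¹) ^ 2)⁻¹)
    (K E F : A)
    (hK : K = ((u⁻¹ : Aˣ) : A))
    (hF : F = cF • ((y : A)))
    (hE : E = cE • ((l + l⁻¹) • ((y⁻¹ : Aˣ) : A)
        + Q • ((u : A) * ((y⁻¹ : Aˣ) : A))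
        + Q⁻¹ • (((u⁻¹ : Aˣ) : A) * ((y⁻¹ : Aˣ) : A)))) :
    K * E = Q ^ 2 • (E * K) ∧
    K * F = (Q ^ 2)⁻¹ • (F * K) ∧
    E * F - F * E = (Q - Q⁻¹)⁻¹ • (K - ((u : A))) :=
  weyl_pair_rep_general Q hQ0 u y huy l cE cF hc K E F hK hF hE
end

section
/- With the hypotheses and definitions of the previous statement (u·y = Q²·y·u, K = u^{-1}, F = c_F·y, E = c_E·((λ+λ^{-1})y^{-1} + Q·u·y^{-1} + Q^{-1}·u^{-1}·y^{-1}), c_E·c_F = -(Q-Q^{-1})^{-2}), the Casimir element takes the scalar value: -(Q - Q^{-1})²·E·F - Q^{-1}·K - Q·K^{-1} = (λ + λ^{-1})·1. -/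
/-! Every summand of `E` ends in `y⁻¹`, so `E F = c_E c_F ((λ+λ⁻¹) + Q u + Q⁻¹ u⁻¹)`; the
normalisation `c_E c_F = -(Q-Q⁻¹)⁻²` turns `-(Q-Q⁻¹)² E F` into exactly this bracket, whose last
two terms are cancelled by `Q⁻¹ K + Q K⁻¹`. -/

theorem sub_inv_ne_zero_of_sq_ne_one {K : Type*} [Field K] {Q : K} (hQ0 : Q ≠ 0)
    (hQ1 : Q ^ 2 ≠ 1) : Q - Q⁻¹ ≠ 0 := by
  intro h
  have hQQ : Q * Q⁻¹ = 1 := mul_inv_cancel₀ hQ0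
  rw [← sub_eq_zero.mp h] at hQQ
  exact hQ1 (by rw [sq, hQQ])

theorem smul_mul_units_inv_mul_smul {R A : Type*} [CommSemiring R] [Semiring A] [Algebra R A]
    (a b : R) (x : A) (y : Aˣ) : a • (x * ↑y⁻¹) * b • (y : A) = (a * b) • x := by
  rw [smul_mul_smul_comm, Units.inv_mul_cancel_right]

theorem weyl_pair_rep_casimir_general {A : Type*} [Ring A] [Algebra ℂ A]
    (Q : ℂ) (hQ0 : Q ≠ 0) (hQ1 : Q ^ 2 ≠ 1)
    (u y : Aˣ)
    (l : ℂ)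
    (cE cF : ℂ)
    (hc : cE * cF = -((Q - Q⁻¹) ^ 2)⁻¹)
    (K E F : A)
    (hK : K = ((u⁻¹ : Aˣ) : A))
    (hF : F = cF • ((y : A)))
    (hE : E = cE • ((l + l⁻¹) • ((y⁻¹ : Aˣ) : A)
        + Q • ((u : A) * ((y⁻¹ : Aˣ) : A))
        + Q⁻¹ • (((u⁻¹ : Aˣ) : A) * ((y⁻¹ : Aˣ) : A)))) :
    -((Q - Q⁻¹) ^ 2) • (E * F) - Q⁻¹ • K - Q • ((u : A)) = (l + l⁻¹) • (1 : A) := by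
  have hnorm : -((Q - Q⁻¹) ^ 2) * (cE * cF) = 1 := by
    rw [hc, neg_mul_neg, mul_inv_cancel₀ (pow_ne_zero 2 (sub_inv_ne_zero_of_sq_ne_one hQ0 hQ1))]
  have hEF : E * F = (cE * cF) • ((l + l⁻¹) • (1 : A) + Q • (u : A) + Q⁻¹ • ((u⁻¹ : Aˣ) : A)) := by
    rw [← smul_mul_units_inv_mul_smul cE cF _ y, hE, hF]
    simp only [add_mul, smul_mul_assoc, one_mul]
  rw [hEF, smul_smul, hnorm, one_smul, hK]
  abel

/-- In the representation `π^λ` of `𝒰_Q(sl₂)` built from a `Q²`-Weyl pair (`uy = Q²yu`,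
`K = u⁻¹`, `F = c_F y`, `E = c_E((λ+λ⁻¹)y⁻¹ + Q·u·y⁻¹ + Q⁻¹·u⁻¹·y⁻¹)`,
`c_E c_F = -(Q-Q⁻¹)⁻²`), the quadratic Casimir takes the scalar value `λ + λ⁻¹`:
`-(Q-Q⁻¹)²·EF - Q⁻¹·K - Q·K⁻¹ = (λ+λ⁻¹)·1`. -/
theorem weyl_pair_rep_casimir {A : Type*} [Ring A] [Algebra ℂ A]
    (Q : ℂ) (hQ0 : Q ≠ 0) (hQ1 : Q ^ 2 ≠ 1)
    (u y : Aˣ) (huy : (u : A) * (y : A) = Q ^ 2 • ((y : A) * (u : A)))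
    (l : ℂ) (hl : l ≠ 0)
    (cE cF : ℂ) (hcE : cE ≠ 0) (hcF : cF ≠ 0)
    (hc : cE * cF = -((Q - Q⁻¹) ^ 2)⁻¹)
    (K E F : A)
    (hK : K = ((u⁻¹ : Aˣ) : A))
    (hF : F = cF • ((y : A)))
    (hE : E = cE • ((l + l⁻¹) • ((y⁻¹ : Aˣ) : A)
        + Q • ((u : A) * ((y⁻¹ : Aˣ) : A))
        + Q⁻¹ • (((u⁻¹ : Aˣ) : A) * ((y⁻¹ : Aˣ) : A)))) :
    -((Q - Q⁻¹) ^ 2) • (E * F) - Q⁻¹ • K - Q • ((u : A)) = (l + l⁻¹) • (1 : A) :=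
  weyl_pair_rep_casimir_general Q hQ0 hQ1 u y l cE cF hc K E F hK hF hE
end

section
/- Let A be an associative unital ℂ-algebra, q ∈ ℂ nonzero and not a root of unity (so that [n]_q := (qⁿ-q^{-n})/(q-q^{-1}) ≠ 0 for all n ≥ 1), and let x ∈ A be nilpotent. Define the q-exponential E_q(x) := Σ_{n≥0} q^{n(n-1)/2}·xⁿ/[n]_q! (a finite sum since x is nilpotent), where [n]_q! = [n]_q[n-1]_q⋯[1]_q and [0]_q! = 1. Then E_q(x)·E_{q^{-1}}(-x) = 1. -/
/-- The `q`-number `[n]_q = (qⁿ - q⁻ⁿ)/(q - q⁻¹)` for `n : ℕ`. -/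
noncomputable def qnum (q : ℂ) (n : ℕ) : ℂ := (q ^ n - (q⁻¹) ^ n) / (q - q⁻¹)

/-- The `q`-factorial `[n]_q! = [n]_q [n-1]_q ⋯ [1]_q`, with `[0]_q! = 1`. -/
noncomputable def qfact (q : ℂ) : ℕ → ℂ
  | 0 => 1
  | n + 1 => qnum q (n + 1) * qfact q n

/-- The truncated `q`-exponential `E_q(x) = Σ_{n<N} q^{n(n-1)/2} xⁿ/[n]_q!`. -/
noncomputable def qexp {A : Type*} [Ring A] [Algebra ℂ A]
    (q : ℂ) (x : A) (N : ℕ) : A :=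
  ∑ n ∈ Finset.range N, (q ^ (n * (n - 1) / 2) / qfact q n) • x ^ n


/-
View `E_q(x)` and `E_{q⁻¹}(-x)` as evaluations at `x` of truncations of formal power series
`F` and `G`; since `xᴺ = 0`, truncation at order `N` commutes with products under evaluation,
so it suffices to show `F * G = 1`. For the symmetric `q`-derivative `D_q Xⁿ = [n]_q Xⁿ⁻¹` one
has `D_q F = F(qX)` and `D_q G = -G(q⁻¹X)`, and the twisted Leibniz rule
`D_q (f g) = f(qX) D_q g + D_q f · g(q⁻¹X)` gives `D_q (F G) = 0`. As no `[n]_q` vanishes,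
`F G` is the constant `1`.
-/

open PowerSeries Finset
open scoped Polynomial
open Polynomial (aeval aeval_def aeval_X)

theorem aeval_trunc_eq_sum {R A : Type*} [CommSemiring R] [Semiring A] [Algebra R A]
    (x : A) (N : ℕ) (f : R⟦X⟧) :
    aeval x (trunc N f) = ∑ i ∈ range N, coeff i f • x ^ i := by
  simp only [aeval_def, eval₂_trunc_eq_sum_range, Algebra.smul_def]

section Truncation

variable {R A : Type*} [CommRing R] [Ring A] [Algebra R A]

theorem aeval_trunc_of_pow_eq_zero {x : A} {N : ℕ} (hx : x ^ N = 0) (p : R[X]) :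
    aeval x (trunc N (p : R⟦X⟧)) = aeval x p := by
  obtain ⟨r, hr⟩ : (Polynomial.X ^ N : R[X]) ∣ p - trunc N (p : R⟦X⟧) :=
    Polynomial.X_pow_dvd_iff.2 fun d hd => by simp [coeff_trunc, hd]
  have hdiff : aeval x (p - trunc N (p : R⟦X⟧)) = 0 := by
    rw [hr, map_mul, map_pow, aeval_X, hx, zero_mul]
  exact (sub_eq_zero.1 (by rwa [map_sub] at hdiff)).symm

theorem aeval_trunc_mul_of_pow_eq_zero {x : A} {N : ℕ} (hx : x ^ N = 0) (f g : R⟦X⟧) :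
    aeval x (trunc N (f * g)) = aeval x (trunc N f) * aeval x (trunc N g) := by
  rw [← trunc_trunc_mul_trunc, ← Polynomial.coe_mul, aeval_trunc_of_pow_eq_zero hx, map_mul]

theorem aeval_neg_trunc (x : A) (N : ℕ) (f : R⟦X⟧) :
    aeval (-x) (trunc N f) = aeval x (trunc N (rescale (-1) f)) := by
  simp only [aeval_trunc_eq_sum, coeff_rescale, mul_smul, ← neg_one_smul R x, _root_.smul_pow]
  exact sum_congr rfl fun _ _ => smul_comm _ _ _

end Truncation

theorem qnum_zero (q : ℂ) : qnum q 0 = 0 := by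
  simp [qnum]

theorem qnum_inv (q : ℂ) (n : ℕ) : qnum q⁻¹ n = qnum q n := by
  rw [qnum, qnum, inv_inv, ← neg_div_neg_eq, neg_sub, neg_sub]

theorem qnum_add (q : ℂ) (m n : ℕ) :
    qnum q (m + n) = q ^ m * qnum q n + q⁻¹ ^ n * qnum q m := by
  simp only [qnum, pow_add]
  ring

/-- The symmetric `q`-derivative `(f(qX) - f(q⁻¹X)) / ((q - q⁻¹) X)`. -/
noncomputable def qderiv (q : ℂ) (f : ℂ⟦X⟧) : ℂ⟦X⟧ :=
  mk fun n => qnum q (n + 1) * coeff (n + 1) f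

theorem coeff_qderiv (q : ℂ) (f : ℂ⟦X⟧) (n : ℕ) :
    coeff n (qderiv q f) = qnum q (n + 1) * coeff (n + 1) f :=
  coeff_mk _ _

theorem qderiv_inv (q : ℂ) : qderiv q⁻¹ = qderiv q := by
  ext f n
  simp only [coeff_qderiv, qnum_inv]

theorem qderiv_rescale (q c : ℂ) (f : ℂ⟦X⟧) :
    qderiv q (rescale c f) = C c * rescale c (qderiv q f) := by
  ext n
  simp only [coeff_qderiv, coeff_rescale, coeff_C_mul, pow_succ]
  ring

theorem qderiv_mul (q : ℂ) (f g : ℂ⟦X⟧) :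
    qderiv q (f * g) = rescale q f * qderiv q g + qderiv q f * rescale q⁻¹ g := by
  ext n
  have split : ∀ p ∈ antidiagonal (n + 1),
      qnum q (n + 1) * (coeff p.1 f * coeff p.2 g) =
        q ^ p.1 * coeff p.1 f * (qnum q p.2 * coeff p.2 g) +
          qnum q p.1 * coeff p.1 f * (q⁻¹ ^ p.2 * coeff p.2 g) := by
    intro p hp
    rw [← mem_antidiagonal.mp hp, qnum_add]
    ring
  rw [coeff_qderiv, coeff_mul, mul_sum, sum_congr rfl split, sum_add_distrib,
    Nat.sum_antidiagonal_succ', Nat.sum_antidiagonal_succ]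
  simp [coeff_mul, coeff_qderiv, coeff_rescale, qnum_zero, mul_assoc]

theorem eq_C_of_qderiv_eq_zero {q : ℂ} (hq : ∀ n : ℕ, 1 ≤ n → qnum q n ≠ 0) {f : ℂ⟦X⟧}
    (hf : qderiv q f = 0) : f = C (constantCoeff f) := by
  ext (_ | n)
  · simp
  · have := congrArg (coeff n) hf
    rw [coeff_qderiv, map_zero, mul_eq_zero] at this
    simpa [coeff_C] using this.resolve_left (hq (n + 1) n.succ_pos)

noncomputable def qexpSeries (q : ℂ) : ℂ⟦X⟧ :=
  mk fun n => q ^ (n * (n - 1) / 2) / qfact q n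

theorem constantCoeff_qexpSeries (q : ℂ) : constantCoeff (qexpSeries q) = 1 := by
  simp [qexpSeries, ← coeff_zero_eq_constantCoeff_apply, qfact]

theorem qderiv_qexpSeries {q : ℂ} (hq : ∀ n : ℕ, 1 ≤ n → qnum q n ≠ 0) :
    qderiv q (qexpSeries q) = rescale q (qexpSeries q) := by
  ext n
  rw [coeff_qderiv, coeff_rescale, qexpSeries, coeff_mk, coeff_mk, qfact, Nat.triangle_succ,
    pow_add, ← mul_div_assoc, mul_div_mul_left _ _ (hq (n + 1) n.succ_pos)]
  ring

theorem qexpSeries_mul_rescale_neg_one_qexpSeries_inv {q : ℂ}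
    (hq : ∀ n : ℕ, 1 ≤ n → qnum q n ≠ 0) :
    qexpSeries q * rescale (-1) (qexpSeries q⁻¹) = 1 := by
  have hq' : ∀ n : ℕ, 1 ≤ n → qnum q⁻¹ n ≠ 0 := by simpa only [qnum_inv] using hq
  have hG : qderiv q (rescale (-1) (qexpSeries q⁻¹)) =
      -rescale q⁻¹ (rescale (-1) (qexpSeries q⁻¹)) := by
    rw [qderiv_rescale, ← qderiv_inv, qderiv_qexpSeries hq', rescale_rescale, rescale_rescale,
      mul_comm (-1 : ℂ), map_neg, map_one, neg_one_mul]
  have hFG : qderiv q (qexpSeries q * rescale (-1) (qexpSeries q⁻¹)) = 0 := by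
    rw [qderiv_mul, hG, qderiv_qexpSeries hq]
    ring
  rw [eq_C_of_qderiv_eq_zero hq hFG, map_mul, ← coeff_zero_eq_constantCoeff_apply (rescale _ _),
    coeff_rescale, coeff_zero_eq_constantCoeff_apply, constantCoeff_qexpSeries,
    constantCoeff_qexpSeries, pow_zero, mul_one, mul_one, map_one]

theorem qexp_eq_aeval_trunc {A : Type*} [Ring A] [Algebra ℂ A] (q : ℂ) (x : A) (N : ℕ) :
    qexp q x N = aeval x (trunc N (qexpSeries q)) := by
  simp only [qexp, aeval_trunc_eq_sum, qexpSeries, coeff_mk]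

theorem qexp_mul_qexp_inv_general {A : Type*} [Ring A] [Algebra ℂ A]
    (q : ℂ) (hq : ∀ n : ℕ, 1 ≤ n → qnum q n ≠ 0)
    (x : A) (N : ℕ) (hx : x ^ N = 0) :
    qexp q x N * qexp q⁻¹ (-x) N = 1 := by
  rw [qexp_eq_aeval_trunc, qexp_eq_aeval_trunc, aeval_neg_trunc,
    ← aeval_trunc_mul_of_pow_eq_zero hx, qexpSeries_mul_rescale_neg_one_qexpSeries_inv hq]
  cases N with
  | zero => simpa using hx.symm
  | succ N => rw [trunc_one, map_one]

/-- For nilpotent `x` (so that the `q`-exponential series is a finite sum),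
`E_q(x) · E_{q⁻¹}(-x) = 1`, provided all the `q`-numbers `[n]_q`, `n ≥ 1`, are nonzero. -/
theorem qexp_mul_qexp_inv {A : Type*} [Ring A] [Algebra ℂ A]
    (q : ℂ) (hq0 : q ≠ 0) (hq : ∀ n : ℕ, 1 ≤ n → qnum q n ≠ 0)
    (x : A) (N : ℕ) (hx : x ^ N = 0) :
    qexp q x N * qexp q⁻¹ (-x) N = 1 :=
  qexp_mul_qexp_inv_general q hq x N hx
end

section
/- Let q ∈ ℂ be nonzero and let R be the 4×4 complex matrix acting on ℂ²⊗ℂ² with diagonal entries (q,1,1,q) in the basis (e₁⊗e₁, e₁⊗e₂, e₂⊗e₁, e₂⊗e₂), the single extra entry q - q^{-1} sending e₂⊗e₁ to e₁⊗e₂, and zeros elsewhere; let R₂₁ = P R P with P the flip. Let A be an associative unital ℂ-algebra and M = (M^i_j) a 2×2 matrix with entries in A satisfying the reflection equation M₁ R₁₂ M₂ R₂₁ = R₁₂ M₂ R₂₁ M₁ (an identity of 4×4 matrices over A, where M₁ = M ⊗ I₂, M₂ = I₂ ⊗ M, and scalar matrices commute with entries of M). Then the quantum determinant Det_{q²}(M)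 := M¹₁·M²₂ - q²·M²₁·M¹₂ commutes with all four entries M¹₁, M¹₂, M²₁, M²₂. -/
open Matrix

/-- The `U_q(sl₂)` `R`-matrix on `ℂ²⊗ℂ²`: diagonal `(q,1,1,q)` in the basis
`(e₁⊗e₁, e₁⊗e₂, e₂⊗e₁, e₂⊗e₂)`, with the single extra entry `q - q⁻¹` sending
`e₂⊗e₁` to `e₁⊗e₂`. -/
noncomputable def ReflR (q : ℂ) : Matrix (Fin 2 × Fin 2) (Fin 2 × Fin 2) ℂ :=
  Matrix.of fun p p' =>
    if p = p' then (if p.1 = p.2 then q else 1)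
    else if p = ((0 : Fin 2), (1 : Fin 2)) ∧ p' = ((1 : Fin 2), (0 : Fin 2)) then q - q⁻¹
    else 0

/-- The flip operator `P` on `ℂ²⊗ℂ²`. -/
noncomputable def Pflip : Matrix (Fin 2 × Fin 2) (Fin 2 × Fin 2) ℂ :=
  Matrix.of fun p p' => if p.1 = p'.2 ∧ p.2 = p'.1 then 1 else 0

/-- `R₂₁ = P R P`. -/
noncomputable def ReflR21 (q : ℂ) : Matrix (Fin 2 × Fin 2) (Fin 2 × Fin 2) ℂ :=
  Pflip * ReflR q * Pflip

set_option maxHeartbeats 4000000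

/-- If a 2×2 matrix `M` with entries in a ℂ-algebra satisfies the reflection equation
`M₁ R₁₂ M₂ R₂₁ = R₁₂ M₂ R₂₁ M₁`, then the quantum determinant
`Det_{q²}(M) = M¹₁ M²₂ - q² M²₁ M¹₂` commutes with all four entries of `M`. -/
theorem reflection_qdet_central {A : Type*} [Ring A] [Algebra ℂ A]
    (q : ℂ) (hq : q ≠ 0)
    (M : Matrix (Fin 2) (Fin 2) A)
    (hre :
      (Matrix.kroneckerMap (· * ·) M (1 : Matrix (Fin 2) (Fin 2) A)) *
          ((ReflR q).map (algebraMap ℂ A)) *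
          (Matrix.kroneckerMap (· * ·) (1 : Matrix (Fin 2) (Fin 2) A) M) *
          ((ReflR21 q).map (algebraMap ℂ A)) =
        ((ReflR q).map (algebraMap ℂ A)) *
          (Matrix.kroneckerMap (· * ·) (1 : Matrix (Fin 2) (Fin 2) A) M) *
          ((ReflR21 q).map (algebraMap ℂ A)) *
          (Matrix.kroneckerMap (· * ·) M (1 : Matrix (Fin 2) (Fin 2) A))) :
    let D : A := M 0 0 * M 1 1 - q ^ 2 • (M 1 0 * M 0 1)
    ∀ i j : Fin 2, D * M i j = M i j * D := by
  have e1 := congrFun (congrFun hre ((0:Fin 2),(0:Fin 2))) ((0:Fin 2),(1:Fin 2))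
  have e2 := congrFun (congrFun hre ((1:Fin 2),(0:Fin 2))) ((0:Fin 2),(0:Fin 2))
  have e3 := congrFun (congrFun hre ((1:Fin 2),(0:Fin 2))) ((1:Fin 2),(1:Fin 2)) -- unused slot
  have e3' := congrFun (congrFun hre ((1:Fin 2),(0:Fin 2))) ((1:Fin 2),(0:Fin 2))
  have e4 := congrFun (congrFun hre ((0:Fin 2),(1:Fin 2))) ((1:Fin 2),(0:Fin 2))
  have e5 := congrFun (congrFun hre ((0:Fin 2),(1:Fin 2))) ((1:Fin 2),(1:Fin 2))
  have e6 := congrFun (congrFun hre ((1:Fin 2),(1:Fin 2))) ((0:Fin 2),(1:Fin 2))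
  clear e3
  simp only [Matrix.mul_apply, Fintype.sum_prod_type, Fin.sum_univ_two, ReflR, ReflR21, Pflip,
    Matrix.kroneckerMap_apply, Matrix.map_apply, Matrix.one_apply, Matrix.of_apply, Prod.mk.injEq,
    Fin.isValue] at e1 e2 e3' e4 e5 e6
  norm_num at e1 e2 e3' e4 e5 e6
  simp only [Algebra.algebraMap_eq_smul_one, smul_mul_assoc, mul_smul_comm, one_mul, mul_one,
    smul_smul, sub_mul, mul_sub, smul_sub, sub_smul, add_mul, mul_add, smul_add, one_smul]
    at e1 e2 e3' e4 e5 e6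
  -- clean relations
  have hba : M 0 1 * M 0 0 = (q^2 : ℂ) • (M 0 0 * M 0 1) := by
    linear_combination (norm := match_scalars <;> field_simp <;> ring) (-q : ℂ) • e1
  have hca : M 1 0 * M 0 0 = ((q^2)⁻¹ : ℂ) • (M 0 0 * M 1 0) := by
    linear_combination (norm := match_scalars <;> field_simp <;> ring) ((q^2)⁻¹ : ℂ) • e2
  have hda : M 1 1 * M 0 0 = M 0 0 * M 1 1 := e3'
  have hcb : M 1 0 * M 0 1 = M 0 1 * M 1 0 + (1 - (q^2)⁻¹ : ℂ) • (M 0 0 * M 0 0)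
      - (1 - (q^2)⁻¹ : ℂ) • (M 0 0 * M 1 1) := by
    linear_combination (norm := match_scalars <;> field_simp <;> ring) (-q⁻¹ : ℂ) • e4
  have hdb : M 1 1 * M 0 1 = M 0 1 * M 1 1 + (1 - (q^2)⁻¹ : ℂ) • (M 0 0 * M 0 1) := by
    linear_combination (norm := match_scalars <;> field_simp <;> ring) (-1 : ℂ) • e5
  have hdc : M 1 1 * M 1 0 = M 1 0 * M 1 1 + ((q^2)⁻¹*(q^2)⁻¹ - (q^2)⁻¹ : ℂ) • (M 0 0 * M 1 0) := by
    linear_combination (norm := match_scalars <;> field_simp <;> ring)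
      (-1 : ℂ) • e6 + ((q^2)⁻¹*(q^2)⁻¹ - (q^2)⁻¹ : ℂ) • e2
  -- extended forms
  have hba' : ∀ x : A, M 0 1 * (M 0 0 * x) = (q^2 : ℂ) • (M 0 0 * (M 0 1 * x)) := fun x => by
    rw [← mul_assoc, hba, smul_mul_assoc, mul_assoc]
  have hca' : ∀ x : A, M 1 0 * (M 0 0 * x) = ((q^2)⁻¹ : ℂ) • (M 0 0 * (M 1 0 * x)) := fun x => by
    rw [← mul_assoc, hca, smul_mul_assoc, mul_assoc]
  have hda' : ∀ x : A, M 1 1 * (M 0 0 * x) = M 0 0 * (M 1 1 * x) := fun x => by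
    rw [← mul_assoc, hda, mul_assoc]
  have hcb' : ∀ x : A, M 1 0 * (M 0 1 * x) = M 0 1 * (M 1 0 * x)
      + (1 - (q^2)⁻¹ : ℂ) • (M 0 0 * (M 0 0 * x))
      - (1 - (q^2)⁻¹ : ℂ) • (M 0 0 * (M 1 1 * x)) := fun x => by
    rw [← mul_assoc, hcb]
    simp only [add_mul, sub_mul, smul_mul_assoc, mul_assoc]
  have hdb' : ∀ x : A, M 1 1 * (M 0 1 * x) = M 0 1 * (M 1 1 * x)
      + (1 - (q^2)⁻¹ : ℂ) • (M 0 0 * (M 0 1 * x)) := fun x => by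
    rw [← mul_assoc, hdb]
    simp only [add_mul, smul_mul_assoc, mul_assoc]
  have hdc' : ∀ x : A, M 1 1 * (M 1 0 * x) = M 1 0 * (M 1 1 * x)
      + ((q^2)⁻¹*(q^2)⁻¹ - (q^2)⁻¹ : ℂ) • (M 0 0 * (M 1 0 * x)) := fun x => by
    rw [← mul_assoc, hdc]
    simp only [add_mul, smul_mul_assoc, mul_assoc]
  intro D i j
  fin_cases i <;> fin_cases j
  · show (M 0 0 * M 1 1 - q ^ 2 • (M 1 0 * M 0 1)) * M 0 0
        = M 0 0 * (M 0 0 * M 1 1 - q ^ 2 • (M 1 0 * M 0 1))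
    simp only [sub_mul, mul_sub, smul_mul_assoc, mul_smul_comm, mul_add, add_mul, smul_add,
      smul_sub, smul_smul, mul_assoc, hba, hba', hca, hca', hda, hda', hcb, hcb', hdb, hdb',
      hdc, hdc']
    match_scalars <;> field_simp <;> ring
  · show (M 0 0 * M 1 1 - q ^ 2 • (M 1 0 * M 0 1)) * M 0 1
        = M 0 1 * (M 0 0 * M 1 1 - q ^ 2 • (M 1 0 * M 0 1))
    simp only [sub_mul, mul_sub, smul_mul_assoc, mul_smul_comm, mul_add, add_mul, smul_add,
      smul_sub, smul_smul, mul_assoc, hba, hba', hca, hca', hda, hda', hcb, hcb', hdb, hdb',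
      hdc, hdc']
    match_scalars <;> field_simp <;> ring
  · show (M 0 0 * M 1 1 - q ^ 2 • (M 1 0 * M 0 1)) * M 1 0
        = M 1 0 * (M 0 0 * M 1 1 - q ^ 2 • (M 1 0 * M 0 1))
    simp only [sub_mul, mul_sub, smul_mul_assoc, mul_smul_comm, mul_add, add_mul, smul_add,
      smul_sub, smul_smul, mul_assoc, hba, hba', hca, hca', hda, hda', hcb, hcb', hdb, hdb',
      hdc, hdc']
    match_scalars <;> field_simp <;> ring
  · show (M 0 0 * M 1 1 - q ^ 2 • (M 1 0 * M 0 1)) * M 1 1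
        = M 1 1 * (M 0 0 * M 1 1 - q ^ 2 • (M 1 0 * M 0 1))
    simp only [sub_mul, mul_sub, smul_mul_assoc, mul_smul_comm, mul_add, add_mul, smul_add,
      smul_sub, smul_smul, mul_assoc, hba, hba', hca, hca', hda, hda', hcb, hcb', hdb, hdb',
      hdc, hdc']
    match_scalars <;> field_simp <;> ring
end
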